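/- arXiv:2510.05689 — 2 statements merged into one kernel-verified Lean document; each statement's English description precedes it below -/
import Mathlib

section
/- For every v ∈ (0, t) at which J is differentiable one has F′(v) ≥ J′(v) + α G(v); consequently, if v₀ ∈ (0, t) denotes the unique zero of G, then F′(v) > 0 for every v ∈ (v₀, t) at which J is differentiable. -/
open MeasureTheory Real Set Topology

/-!
Factoring `e^{-β(s-v)} = e^{βv} e^{-βs}` makes the weighted tail integral in `F` differentiable in
`v`, with `F' = J' + α (e^{J(v)} - 1) - αβ ∫_v^t (e^{J(s)} - 1) e^{-β(s-v)} ds`. Since `J ≥ 0` on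
`[0, T]` and the kernel `e^{-β(s-v)}` is at most `1` for `s ≥ v`, the last integral is at most
`∫_v^t (e^{J(s)} - 1) ds`, which gives `F' ≥ J' + α G`. As `G(t) = e^{J(t)} - 1 > 0`, the
intermediate value theorem keeps `G` positive to the right of its unique zero, and `J' ≥ 0` because
`J` is monotone.
-/

theorem integral_mul_exp_neg_mul_sub (f : ℝ → ℝ) (β v t : ℝ) :
    ∫ s in v..t, f s * exp (-β * (s - v)) = exp (β * v) * ∫ s in v..t, f s * exp (-β * s) := by
  rw [← intervalIntegral.integral_const_mul]
  refine intervalIntegral.integral_congr fun s _ => ?_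
  simp only [show -β * (s - v) = β * v + -β * s by ring, exp_add]
  ring

theorem hasDerivAt_integral_mul_exp_neg_mul_sub {f : ℝ → ℝ} (hf : Continuous f) (β t v : ℝ) :
    HasDerivAt (fun u => ∫ s in u..t, f s * exp (-β * (s - u)))
      (β * (∫ s in v..t, f s * exp (-β * (s - v))) - f v) v := by
  have hg : Continuous fun s => f s * exp (-β * s) := by fun_prop
  have hint := intervalIntegral.integral_hasDerivAt_left (hg.intervalIntegrable v t)
    (hg.stronglyMeasurableAtFilter _ _) hg.continuousAt
  have hexp : HasDerivAt (fun u => exp (β * u)) (exp (β * v) * β) v := by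
    simpa using ((hasDerivAt_id v).const_mul β).exp
  simp only [integral_mul_exp_neg_mul_sub f β _ t]
  refine (hexp.mul hint).congr_deriv ?_
  have : exp (β * v) * exp (-β * v) = 1 := by rw [← exp_add]; simp
  linear_combination (-f v) * this

theorem integral_mul_exp_neg_mul_sub_le_integral {f : ℝ → ℝ} (hf : Continuous f) {β v t : ℝ}
    (hβ : 0 ≤ β) (hvt : v ≤ t) (hf_nonneg : ∀ s ∈ Icc v t, 0 ≤ f s) :
    ∫ s in v..t, f s * exp (-β * (s - v)) ≤ ∫ s in v..t, f s :=
  intervalIntegral.integral_mono_on hvt ((by fun_prop : Continuous _).intervalIntegrable v t)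
    (hf.intervalIntegrable v t) fun s hs =>
      mul_le_of_le_one_right (hf_nonneg s hs) (exp_le_one_iff.2 (by nlinarith [hs.1]))

theorem MonotoneOn.deriv_nonneg_of_mem_nhds {g : ℝ → ℝ} {s : Set ℝ} {x : ℝ}
    (hg : MonotoneOn g s) (hs : s ∈ 𝓝 x) : 0 ≤ deriv g x := by
  rw [← derivWithin_of_mem_nhds hs]
  exact hg.derivWithin_nonneg

theorem ContinuousOn.pos_of_ne_zero_of_pos_right {G : ℝ → ℝ} {a b : ℝ}
    (hG : ContinuousOn G (Icc a b)) (hb : 0 < G b) (hne : ∀ w ∈ Ioo a b, G w ≠ 0) {v : ℝ}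
    (hv : v ∈ Ioo a b) : 0 < G v := by
  by_contra! hle
  obtain ⟨w, hw, hGw⟩ := intermediate_value_Icc hv.2.le
    (hG.mono (Icc_subset_Icc_left hv.1.le)) ⟨hle, hb.le⟩
  have hwb : w ≠ b := fun h => hb.ne' (h ▸ hGw)
  exact hne w ⟨hv.1.trans_le hw.1, hw.2.lt_of_ne hwb⟩ hGw

theorem derivF_lower_bound_and_pos_general
    (T t α β : ℝ) (htT : t ≤ T)
    (hα : 0 < α) (hβ : 0 < β)
    (J : ℝ → ℝ) (hJcont : Continuous J)
    (hJmono : StrictMonoOn J (Set.Icc 0 T)) (hJ0 : J 0 = 0)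
    (G F : ℝ → ℝ)
    (hG : ∀ v, G v = (Real.exp (J v) - 1) - β * ∫ s in v..t, (Real.exp (J s) - 1))
    (hF : ∀ v, F v = J v - α * ∫ s in v..t, (Real.exp (J s) - 1) * Real.exp (-β * (s - v))) :
    (∀ v ∈ Set.Ioo 0 t, DifferentiableAt ℝ J v →
        deriv J v + α * G v ≤ deriv F v) ∧
    (∀ v₀ ∈ Set.Ioo 0 t, G v₀ = 0 → (∀ w ∈ Set.Ioo 0 t, G w = 0 → w = v₀) →
        ∀ v ∈ Set.Ioo v₀ t, DifferentiableAt ℝ J v → 0 < deriv F v) := by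
  have hE : Continuous fun s => exp (J s) - 1 := by fun_prop
  have hJ_nonneg : ∀ s ∈ Icc 0 T, 0 ≤ J s := fun s hs =>
    hJ0 ▸ hJmono.monotoneOn ⟨le_rfl, hs.1.trans hs.2⟩ hs hs.1
  have lower : ∀ v ∈ Ioo 0 t, DifferentiableAt ℝ J v → deriv J v + α * G v ≤ deriv F v := by
    intro v hv hJv
    have hF' : HasDerivAt F _ v := funext hF ▸ hJv.hasDerivAt.fun_sub
      ((hasDerivAt_integral_mul_exp_neg_mul_sub hE β t v).const_mul α)
    have hK := integral_mul_exp_neg_mul_sub_le_integral hE hβ.le hv.2.le fun s hs =>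
      sub_nonneg.2 (one_le_exp (hJ_nonneg s ⟨hv.1.le.trans hs.1, hs.2.trans htT⟩))
    rw [hF'.deriv, hG v]
    nlinarith [mul_le_mul_of_nonneg_left hK (mul_nonneg hα.le hβ.le)]
  refine ⟨lower, fun v₀ hv₀ _ huniq v hv hJv => ?_⟩
  have hv0 : 0 < v := hv₀.1.trans hv.1
  have hJ'_nonneg : 0 ≤ deriv J v :=
    hJmono.monotoneOn.deriv_nonneg_of_mem_nhds (Icc_mem_nhds hv0 (hv.2.trans_le htT))
  have ht : 0 < t := hv0.trans hv.2
  have hGt : 0 < G t := by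
    rw [hG t, intervalIntegral.integral_same, mul_zero, sub_zero, sub_pos, one_lt_exp_iff]
    exact hJ0 ▸ hJmono ⟨le_rfl, ht.le.trans htT⟩ ⟨ht.le, htT⟩ ht
  have hGcont : ContinuousOn G (Icc v₀ t) := by
    rw [funext hG, ← uIcc_of_le (hv.1.trans hv.2).le]
    exact hE.continuousOn.sub (continuousOn_const.mul
      (intervalIntegral.continuousOn_primitive_interval_left hE.integrableOn_uIcc))
  have hGv : 0 < G v := hGcont.pos_of_ne_zero_of_pos_right hGt
    (fun w hw hGw => hw.1.ne' (huniq w ⟨hv₀.1.trans hw.1, hw.2⟩ hGw)) hv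
  nlinarith [lower v ⟨hv0, hv.2⟩ hJv, mul_pos hα hGv]

/-- For every `v ∈ (0, t)` at which `J` is differentiable,
`F' v ≥ J' v + α * G v`; consequently, if `v₀ ∈ (0, t)` is the unique zero of `G`,
then `F' v > 0` for every `v ∈ (v₀, t)` at which `J` is differentiable. -/
theorem derivF_lower_bound_and_pos
    (T t α β : ℝ) (hT : 0 < T) (ht : 0 < t) (htT : t ≤ T)
    (hα : 0 < α) (hβ : 0 < β)
    (J : ℝ → ℝ) (hJcont : Continuous J)
    (hJmono : StrictMonoOn J (Set.Icc 0 T)) (hJ0 : J 0 = 0)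
    (G F : ℝ → ℝ)
    (hG : ∀ v, G v = (Real.exp (J v) - 1) - β * ∫ s in v..t, (Real.exp (J s) - 1))
    (hF : ∀ v, F v = J v - α * ∫ s in v..t, (Real.exp (J s) - 1) * Real.exp (-β * (s - v))) :
    (∀ v ∈ Set.Ioo 0 t, DifferentiableAt ℝ J v →
        deriv J v + α * G v ≤ deriv F v) ∧
    (∀ v₀ ∈ Set.Ioo 0 t, G v₀ = 0 → (∀ w ∈ Set.Ioo 0 t, G w = 0 → w = v₀) →
        ∀ v ∈ Set.Ioo v₀ t, DifferentiableAt ℝ J v → 0 < deriv F v) :=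
  derivF_lower_bound_and_pos_general T t α β htT hα hβ J hJcont hJmono hJ0 G F hG hF
end

section
/- Let u ∈ [0, t], let c > 0, and assume F is monotone nondecreasing on [u, t]. Then ∫_u^t 1_{{F(s) ≤ c}} F(s) e^{−β(s−u)} ds ≥ ∫_u^t 1_{{F(s) ≤ c}} J(s) e^{−β(s−u)} ds − t · 1_{{F(u) ≤ c}} · (J(u) − F(u)), where 1_{{·}} denotes the indicator of the stated condition. -/
/-!
Writing `G_u(s) = ∫_s^t (e^{J r} - 1) e^{-β(r-u)} dr`, the definition of `F` gives
`(J s - F s) e^{-β(s-u)} = α G_u(s)`. Since `J ≥ 0` on `[0, T]`, the integrand of `G_u` is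
nonnegative, so `α G_u(s) ≤ α G_u(u) = J u - F u` for `s ∈ [u, t]`. Monotonicity of `F` gives
`F s ≤ c → F u ≤ c`, so the integrand of `∫_u^t 1_{F ≤ c} (J - F) e^{-β(s-u)}` is bounded by
`1_{F u ≤ c} (J u - F u)`, and integrating over `[u, t]` costs a factor `t - u ≤ t`.
-/

open MeasureTheory Real Set

lemma continuous_intervalIntegral_mul_exp_sub {h : ℝ → ℝ} (hh : Continuous h) (β b : ℝ) :
    Continuous fun v => ∫ s in v..b, h s * exp (-β * (s - v)) := by
  simp_rw [intervalIntegral.integral_symm b]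
  exact (intervalIntegral.continuous_parametric_intervalIntegral_of_continuous
    (f := fun v s => h s * exp (-β * (s - v))) (by fun_prop) continuous_id).neg

lemma intervalIntegral_mul_exp_mul_exp (h : ℝ → ℝ) (β a b v u : ℝ) :
    (∫ r in a..b, h r * exp (-β * (r - v))) * exp (-β * (v - u))
      = ∫ r in a..b, h r * exp (-β * (r - u)) := by
  rw [← intervalIntegral.integral_mul_const]
  refine intervalIntegral.integral_congr fun r _ => ?_
  rw [mul_assoc, ← exp_add]
  ring_nf

lemma intervalIntegrable_ite_le_mul {F φ : ℝ → ℝ} (hF : Continuous F) (hφ : Continuous φ)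
    (c a b : ℝ) :
    IntervalIntegrable (fun s => (if F s ≤ c then (1 : ℝ) else 0) * φ s) volume a b := by
  have hS : MeasurableSet {s | F s ≤ c} := measurableSet_le hF.measurable measurable_const
  have : (fun s => (if F s ≤ c then (1 : ℝ) else 0) * φ s) = {s | F s ≤ c}.indicator φ := by
    ext s
    simp only [indicator_apply, mem_ofPred_eq]
    split_ifs <;> ring
  rw [this]
  exact ⟨hφ.integrableOn_Ioc.indicator hS, hφ.integrableOn_Ioc.indicator hS⟩

lemma integral_ite_le_mul_le_of_monotoneOn {F φ : ℝ → ℝ} {a b c K : ℝ} (hab : a ≤ b)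
    (hF : Continuous F) (hφ : Continuous φ) (hFmono : MonotoneOn F (Icc a b))
    (hφK : ∀ s ∈ Icc a b, φ s ≤ K) (hK : 0 ≤ K) :
    ∫ s in a..b, (if F s ≤ c then (1 : ℝ) else 0) * φ s
      ≤ (b - a) * ((if F a ≤ c then (1 : ℝ) else 0) * K) := by
  have hpoint : ∀ s ∈ Icc a b,
      (if F s ≤ c then (1 : ℝ) else 0) * φ s ≤ (if F a ≤ c then (1 : ℝ) else 0) * K := by
    intro s hs
    by_cases hFs : F s ≤ c
    · have hFa : F a ≤ c := (hFmono (left_mem_Icc.2 hab) hs hs.1).trans hFs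
      simpa [hFs, hFa] using hφK s hs
    · rw [if_neg hFs, zero_mul]
      split_ifs <;> simp [hK]
  simpa using intervalIntegral.integral_mono_on hab (intervalIntegrable_ite_le_mul hF hφ c a b)
    intervalIntegrable_const hpoint

section Resolvent

variable {J h F : ℝ → ℝ} {α β t u : ℝ}

lemma continuous_of_eq_sub_integral
    (hF : ∀ v, F v = J v - α * ∫ s in v..t, h s * exp (-β * (s - v)))
    (hJ : Continuous J) (hh : Continuous h) : Continuous F := by
  rw [funext hF]
  exact hJ.sub (continuous_const.mul (continuous_intervalIntegral_mul_exp_sub hh β t))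

lemma sub_mul_exp_eq_integral
    (hF : ∀ v, F v = J v - α * ∫ s in v..t, h s * exp (-β * (s - v))) (s : ℝ) :
    (J s - F s) * exp (-β * (s - u)) = α * ∫ r in s..t, h r * exp (-β * (r - u)) := by
  rw [← intervalIntegral_mul_exp_mul_exp h β s t s u, hF s]
  ring

lemma sub_mul_exp_le_sub
    (hF : ∀ v, F v = J v - α * ∫ s in v..t, h s * exp (-β * (s - v)))
    (hα : 0 ≤ α) (hh : Continuous h) (hh0 : ∀ r ∈ Icc u t, 0 ≤ h r)
    {s : ℝ} (hs : s ∈ Icc u t) :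
    (J s - F s) * exp (-β * (s - u)) ≤ J u - F u := by
  have hu := sub_mul_exp_eq_integral (u := u) hF u
  rw [sub_self, mul_zero, exp_zero, mul_one] at hu
  rw [hu, sub_mul_exp_eq_integral hF s]
  refine mul_le_mul_of_nonneg_left (intervalIntegral.integral_mono_interval hs.1 hs.2 le_rfl
    ?_ (Continuous.intervalIntegrable (by fun_prop) u t)) hα
  filter_upwards [ae_restrict_mem measurableSet_Ioc] with r hr
  exact mul_nonneg (hh0 r (Ioc_subset_Icc_self hr)) (exp_pos _).le

lemma sub_nonneg_of_eq_sub_integral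
    (hF : ∀ v, F v = J v - α * ∫ s in v..t, h s * exp (-β * (s - v))) (hα : 0 ≤ α)
    (hh0 : ∀ r ∈ Icc u t, 0 ≤ h r) (hut : u ≤ t) : 0 ≤ J u - F u := by
  have hu := sub_mul_exp_eq_integral (u := u) hF u
  rw [sub_self, mul_zero, exp_zero, mul_one] at hu
  rw [hu]
  exact mul_nonneg hα (intervalIntegral.integral_nonneg hut fun r hr =>
    mul_nonneg (hh0 r hr) (exp_pos _).le)

end Resolvent

theorem indicator_F_integral_lower_bound_general
    (T t α β : ℝ) (htT : t ≤ T)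
    (hα : 0 < α)
    (J : ℝ → ℝ) (hJcont : Continuous J)
    (hJmono : StrictMonoOn J (Set.Icc 0 T)) (hJ0 : J 0 = 0)
    (F : ℝ → ℝ)
    (hF : ∀ v, F v = J v - α * ∫ s in v..t, (Real.exp (J s) - 1) * Real.exp (-β * (s - v)))
    (u : ℝ) (hu : u ∈ Set.Icc 0 t) (c : ℝ)
    (hFmono : MonotoneOn F (Set.Icc u t)) :
    (∫ s in u..t, (if F s ≤ c then (1:ℝ) else 0) * J s * Real.exp (-β * (s - u)))
        - t * (if F u ≤ c then (1:ℝ) else 0) * (J u - F u)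
      ≤ ∫ s in u..t, (if F s ≤ c then (1:ℝ) else 0) * F s * Real.exp (-β * (s - u)) := by
  obtain ⟨hu0, hut⟩ := hu
  have hexpJ : Continuous fun s => exp (J s) - 1 := by fun_prop
  have hexpJ_nonneg : ∀ r ∈ Icc u t, 0 ≤ exp (J r) - 1 := fun r hr => by
    have h0r : J 0 ≤ J r := hJmono.monotoneOn ⟨le_rfl, hu0.trans (hut.trans htT)⟩
      ⟨hu0.trans hr.1, hr.2.trans htT⟩ (hu0.trans hr.1)
    simpa [hJ0] using h0r
  have hFcont : Continuous F := continuous_of_eq_sub_integral hF hJcont hexpJ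
  have hK : 0 ≤ J u - F u := sub_nonneg_of_eq_sub_integral hF hα.le hexpJ_nonneg hut
  have hbound := integral_ite_le_mul_le_of_monotoneOn (c := c) hut hFcont
    (φ := fun s => (J s - F s) * exp (-β * (s - u))) (by fun_prop) hFmono
    (fun s hs => sub_mul_exp_le_sub hF hα.le hexpJ hexpJ_nonneg hs) hK
  have hsub : (∫ s in u..t, (if F s ≤ c then (1:ℝ) else 0) * J s * exp (-β * (s - u)))
      - (∫ s in u..t, (if F s ≤ c then (1:ℝ) else 0) * F s * exp (-β * (s - u)))
      = ∫ s in u..t, (if F s ≤ c then (1:ℝ) else 0) * ((J s - F s) * exp (-β * (s - u))) := by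
    simp_rw [mul_assoc]
    rw [← intervalIntegral.integral_sub (intervalIntegrable_ite_le_mul hFcont (by fun_prop) c u t)
      (intervalIntegrable_ite_le_mul hFcont (by fun_prop) c u t)]
    exact intervalIntegral.integral_congr fun s _ => by ring
  have hind : 0 ≤ (if F u ≤ c then (1:ℝ) else 0) * (J u - F u) := by positivity
  have hlength := mul_le_mul_of_nonneg_right (sub_le_self t hu0) hind
  linarith

/-- For `u ∈ [0, t]`, `c > 0`, and `F` monotone nondecreasing on `[u, t]`,
`∫_u^t 1_{F(s) ≤ c} F(s) e^{-β(s-u)} ds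
  ≥ ∫_u^t 1_{F(s) ≤ c} J(s) e^{-β(s-u)} ds - t · 1_{F(u) ≤ c} · (J(u) - F(u))`. -/
theorem indicator_F_integral_lower_bound
    (T t α β : ℝ) (hT : 0 < T) (ht : 0 < t) (htT : t ≤ T)
    (hα : 0 < α) (hβ : 0 < β)
    (J : ℝ → ℝ) (hJcont : Continuous J)
    (hJmono : StrictMonoOn J (Set.Icc 0 T)) (hJ0 : J 0 = 0)
    (F : ℝ → ℝ)
    (hF : ∀ v, F v = J v - α * ∫ s in v..t, (Real.exp (J s) - 1) * Real.exp (-β * (s - v)))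
    (u : ℝ) (hu : u ∈ Set.Icc 0 t) (c : ℝ) (hc : 0 < c)
    (hFmono : MonotoneOn F (Set.Icc u t)) :
    (∫ s in u..t, (if F s ≤ c then (1:ℝ) else 0) * J s * Real.exp (-β * (s - u)))
        - t * (if F u ≤ c then (1:ℝ) else 0) * (J u - F u)
      ≤ ∫ s in u..t, (if F s ≤ c then (1:ℝ) else 0) * F s * Real.exp (-β * (s - u)) :=
  indicator_F_integral_lower_bound_general T t α β htT hα J hJcont hJmono hJ0 F hF u hu c hFmono
end
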